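/- arXiv:1605.06514 — 8 statements merged into one kernel-verified Lean document; each statement's English description precedes it below -/
import Mathlib

section
/- Let Y be a metric space and (X, 𝒜, ν) a probability space. Let f : Y × X → [0,∞) be a function such that (i) for every x ∈ X and every ε > 0 the set {y ∈ Y : f(y,x) < ε} is open in Y, and (ii) for every y ∈ Y and every ε > 0 the set {x ∈ X : f(y,x) < ε} is 𝒜-measurable. Then the set {y ∈ Y : f(y,x) = 0 for ν-almost every x ∈ X} is a G_δ subset of Y, i.e. a countable intersection of open sets. -/
open MeasureTheory Filter Topology

open scoped ENNReal

/-!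
Cover `{x | f y x < ε}` by the sets of `x` on which `f z x < ε` holds for all `z` in a small
neighbourhood of `y`; continuity of measures from below along a countable neighbourhood basis
shows that `y ↦ ν {x | f y x < ε}` is lower semicontinuous. Hence the set of `y` with
`ν {x | f y x < ε} = 1` is a `Gδ`, and the set in question is the intersection of these sets
over `ε = 1/n`.
-/

theorem ENNReal.le_iff_forall_lt_add_inv_nat {a b : ℝ≥0∞} (ha : a ≠ ∞) :
    a ≤ b ↔ ∀ n : ℕ, a < b + (n : ℝ≥0∞)⁻¹ := by
  refine ⟨fun hab n => ?_, fun h => ?_⟩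
  · rcases n.eq_zero_or_pos with rfl | hn
    · simpa using ha.lt_top
    · exact (ENNReal.lt_add_right ha (by simp)).trans_le (add_le_add_left hab _)
  · have : Tendsto (fun n : ℕ => b + (n : ℝ≥0∞)⁻¹) atTop (𝓝 b) := by
      simpa using tendsto_const_nhds.add ENNReal.tendsto_inv_nat_nhds_zero
    exact ge_of_tendsto' this fun n => (h n).le

theorem LowerSemicontinuous.isGδ_setOf_le {Y : Type*} [TopologicalSpace Y] {g : Y → ℝ≥0∞}
    (hg : LowerSemicontinuous g) {a : ℝ≥0∞} (ha : a ≠ ∞) : IsGδ {y | a ≤ g y} := by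
  have : {y | a ≤ g y} = ⋂ n : ℕ, (fun y => g y + (n : ℝ≥0∞)⁻¹) ⁻¹' Set.Ioi a := by
    ext y
    simp [ENNReal.le_iff_forall_lt_add_inv_nat ha]
  rw [this]
  exact .iInter fun n => ((hg.add lowerSemicontinuous_const).isOpen_preimage a).isGδ

theorem lowerSemicontinuous_measure_of_isOpen_setOf_mem {Y X : Type*} [TopologicalSpace Y]
    [FirstCountableTopology Y] [MeasurableSpace X] (μ : Measure X) {s : Y → Set X}
    (hs : ∀ x, IsOpen {y | x ∈ s y}) : LowerSemicontinuous fun y => μ (s y) := by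
  intro y₀ c (hc : c < μ (s y₀))
  obtain ⟨U, hU⟩ := (𝓝 y₀).exists_antitone_basis
  set B : ℕ → Set X := fun k => {x | ∀ z ∈ U k, x ∈ s z}
  have hB_mono : Monotone B := fun k l hkl x hx z hz => hx z (hU.antitone hkl hz)
  have hB_iUnion : ⋃ k, B k = s y₀ := by
    refine Set.Subset.antisymm
      (Set.iUnion_subset fun k x hx => hx y₀ (mem_of_mem_nhds (hU.mem k))) fun x hx => ?_
    obtain ⟨k, -, hk⟩ := hU.toHasBasis.mem_iff.1 ((hs x).mem_nhds hx)
    exact Set.mem_iUnion.2 ⟨k, fun z hz => hk hz⟩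
  rw [← hB_iUnion, hB_mono.measure_iUnion] at hc
  obtain ⟨k, hk⟩ := lt_iSup_iff.1 hc
  filter_upwards [hU.mem k] with z hz
  exact hk.trans_le (measure_mono fun x hx => hx z hz)

theorem isGδ_setOf_ae_mem {Y X : Type*} [TopologicalSpace Y] [FirstCountableTopology Y]
    [MeasurableSpace X] (μ : Measure X) [IsFiniteMeasure μ] {s : Y → Set X}
    (hs_open : ∀ x, IsOpen {y | x ∈ s y}) (hs_meas : ∀ y, NullMeasurableSet (s y) μ) :
    IsGδ {y | ∀ᵐ x ∂μ, x ∈ s y} := by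
  have : {y | ∀ᵐ x ∂μ, x ∈ s y} = {y | μ Set.univ ≤ μ (s y)} := by
    ext y
    simp only [Set.mem_ofPred_eq, ae_mem_iff_measure_eq (hs_meas y),
      (measure_mono (Set.subset_univ (s y))).ge_iff_eq]
  rw [this]
  exact (lowerSemicontinuous_measure_of_isOpen_setOf_mem μ hs_open).isGδ_setOf_le
    (measure_ne_top μ _)

theorem Real.eq_zero_iff_forall_lt_inv_nat_succ {t : ℝ} (ht : 0 ≤ t) :
    t = 0 ↔ ∀ n : ℕ, t < ((n : ℝ) + 1)⁻¹ := by
  refine ⟨fun h n => h ▸ Nat.inv_pos_of_nat, fun h => ht.antisymm' (not_lt.1 fun hpos => ?_)⟩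
  obtain ⟨n, hn⟩ := exists_nat_one_div_lt hpos
  rw [one_div] at hn
  exact lt_asymm (h n) hn

/-- Abstract content of Proposition `gdeltatop`: if `f : Y × X → [0,∞)` is such that
sublevel sets in `y` are open and sublevel sets in `x` are measurable, then the set of
`y` for which `f(y, ·)` vanishes `ν`-almost everywhere is a `Gδ` subset of `Y`. -/
theorem gdelta_of_ae_vanishing
    {Y X : Type*} [MetricSpace Y] [MeasurableSpace X]
    (ν : Measure X) [IsProbabilityMeasure ν]
    (f : Y → X → ℝ) (hf_nonneg : ∀ y x, 0 ≤ f y x)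
    (h_open : ∀ x : X, ∀ ε : ℝ, 0 < ε → IsOpen {y : Y | f y x < ε})
    (h_meas : ∀ y : Y, ∀ ε : ℝ, 0 < ε → MeasurableSet {x : X | f y x < ε}) :
    IsGδ {y : Y | ∀ᵐ x ∂ν, f y x = 0} := by
  have hset : {y : Y | ∀ᵐ x ∂ν, f y x = 0} =
      ⋂ n : ℕ, {y | ∀ᵐ x ∂ν, x ∈ {x | f y x < ((n : ℝ) + 1)⁻¹}} := by
    ext y
    simp only [Set.mem_ofPred_eq, Set.mem_iInter, ← ae_all_iff,
      Real.eq_zero_iff_forall_lt_inv_nat_succ (hf_nonneg y _)]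
  rw [hset]
  exact .iInter fun n => isGδ_setOf_ae_mem ν (fun x => h_open x _ Nat.inv_pos_of_nat)
    fun y => (h_meas y _ Nat.inv_pos_of_nat).nullMeasurableSet
end

section
/- Let Y be a metric space and (X, 𝒜, ν) a probability space. Let V be a map assigning to each x ∈ X an open subset V_x ⊆ Y, and for y ∈ Y set W_y = {x ∈ X : y ∈ V_x}. Assume W_y is 𝒜-measurable for every y ∈ Y. Then for every η ≥ 0 the set J_η = {y ∈ Y : ν(W_y) > η} is open in Y. -/
/-!
If `y i → y` and `y ∈ V x`, then `y i ∈ V x` eventually because `V x` is open, so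
`W y ⊆ liminf W (y i)`. Fatou's lemma for sets gives `ν (W y) ≤ liminf ν (W (y i))`: the map
`y ↦ ν (W y)` is sequentially lower semicontinuous, and `J η` is one of its strict superlevel sets.
-/

open MeasureTheory Filter Topology Set
open scoped ENNReal

theorem MeasureTheory.measure_liminf_atTop_le {α : Type*} [MeasurableSpace α] (μ : Measure α)
    (s : ℕ → Set α) : μ (liminf s atTop) ≤ liminf (fun n ↦ μ (s n)) atTop := by
  have hmono : Monotone fun n ↦ ⋂ i ≥ n, s i := fun m n hmn ↦
    biInter_subset_biInter_left fun i hi ↦ le_trans hmn hi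
  rw [liminf_eq_iSup_iInf_of_nat, liminf_eq_iSup_iInf_of_nat]
  simp only [iSup_eq_iUnion, iInf_eq_iInter]
  rw [hmono.measure_iUnion]
  gcongr with n
  exact le_iInf₂ fun i hi ↦ measure_mono (biInter_subset_of_mem hi)

theorem setOf_mem_subset_liminf {X Y ι : Type*} [TopologicalSpace Y] {V : X → Set Y}
    (hV : ∀ x, IsOpen (V x)) {l : Filter ι} {ys : ι → Y} {y : Y} (hy : Tendsto ys l (𝓝 y)) :
    {x | y ∈ V x} ⊆ liminf (fun i ↦ {x | ys i ∈ V x}) l := fun x hx ↦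
  mem_liminf_iff_eventually_mem.2 (hy.eventually ((hV x).mem_nhds hx))

theorem lowerSemicontinuous_measure_setOf_mem {X Y : Type*} [TopologicalSpace Y]
    [SequentialSpace Y] [MeasurableSpace X] (μ : Measure X) {V : X → Set Y}
    (hV : ∀ x, IsOpen (V x)) : LowerSemicontinuous fun y ↦ μ {x | y ∈ V x} := by
  refine lowerSemicontinuous_iff_isClosed_preimage.2 fun η ↦ IsSeqClosed.isClosed ?_
  intro ys y hys hy
  calc μ {x | y ∈ V x} ≤ μ (liminf (fun i ↦ {x | ys i ∈ V x}) atTop) :=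
        measure_mono (setOf_mem_subset_liminf hV hy)
    _ ≤ liminf (fun i ↦ μ {x | ys i ∈ V x}) atTop := measure_liminf_atTop_le μ _
    _ ≤ η := liminf_le_of_frequently_le' (Frequently.of_forall hys)

theorem isOpen_measure_gt_general
    {Y X : Type*} [MetricSpace Y] [MeasurableSpace X]
    (ν : Measure X)
    (V : X → Set Y) (hV : ∀ x, IsOpen (V x))
    (η : ℝ≥0∞) :
    IsOpen {y : Y | η < ν {x : X | y ∈ V x}} :=
  (lowerSemicontinuous_measure_setOf_mem ν hV).isOpen_preimage η

/-- Lemma `sample2measure`: if `V x ⊆ Y` is open for every `x` and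
`W y = {x | y ∈ V x}` is measurable for every `y`, then for every `η ≥ 0`
the set `J_η = {y | ν (W y) > η}` is open. -/
theorem isOpen_measure_gt
    {Y X : Type*} [MetricSpace Y] [MeasurableSpace X]
    (ν : Measure X) [IsProbabilityMeasure ν]
    (V : X → Set Y) (hV : ∀ x, IsOpen (V x))
    (hW : ∀ y : Y, MeasurableSet {x : X | y ∈ V x})
    (η : ℝ≥0∞) :
    IsOpen {y : Y | η < ν {x : X | y ∈ V x}} :=
  isOpen_measure_gt_general ν V hV η
end

section
/- Let Θ be a nonempty compact topological space and let C⁺(Θ) denote the set of continuous functions h : Θ → [0,∞) that are not identically zero, equipped with the supremum norm ‖·‖_∞; for h ∈ C⁺(Θ) write τ(h) = h/‖h‖_∞. Let h ∈ C⁺(Θ) and let ε be a real number with 0 < ε ≤ ‖h‖_∞. Then the set {τ(h') : h' ∈ C⁺(Θ), ‖h' − h‖_∞ < ε} is an open subset of the metric subspace {f ∈ C⁺(Θ) : ‖f‖_∞ = 1} (with the supremum metric). -/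
/-! If `f = τ(h')` with `‖h' - h‖ < ε`, then every normalized `g` close to `f` is `τ(‖h'‖ • g)`,
and `‖h'‖ • g` stays in the ball: rescaling by `‖h'‖` multiplies distances to `f` by `‖h'‖`,
so `dist g f < (ε - ‖h' - h‖) / ‖h'‖` suffices. -/

section NormedSpace

variable {E : Type*} [NormedAddCommGroup E] [NormedSpace ℝ E]

lemma norm_smul_of_norm_eq_one {c : ℝ} (hc : 0 ≤ c) {g : E} (hg : ‖g‖ = 1) : ‖c • g‖ = c := by
  rw [norm_smul, hg, mul_one, Real.norm_of_nonneg hc]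

lemma inv_norm_smul_smul_of_norm_eq_one {c : ℝ} (hc : 0 < c) {g : E} (hg : ‖g‖ = 1) :
    ‖c • g‖⁻¹ • c • g = g := by
  rw [norm_smul_of_norm_eq_one hc.le hg, inv_smul_smul₀ hc.ne']

lemma dist_norm_smul_lt_of_dist_inv_norm_smul_lt {x y g : E} {ε : ℝ} (hy : y ≠ 0)
    (hg : dist g (‖y‖⁻¹ • y) < (ε - dist y x) / ‖y‖) : dist (‖y‖ • g) x < ε := by
  have hy' : 0 < ‖y‖ := norm_pos_iff.mpr hy
  rw [lt_div_iff₀ hy'] at hg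
  calc dist (‖y‖ • g) x ≤ dist (‖y‖ • g) (‖y‖ • ‖y‖⁻¹ • y) + dist y x := by
        rw [smul_inv_smul₀ hy'.ne']; exact dist_triangle _ _ _
    _ = dist g (‖y‖⁻¹ • y) * ‖y‖ + dist y x := by
        rw [dist_smul₀, Real.norm_of_nonneg hy'.le, mul_comm]
    _ < ε := by linarith

end NormedSpace

theorem isOpen_image_of_normalization_general
    {Θ : Type*} [TopologicalSpace Θ] [CompactSpace Θ]
    (h : C(Θ, ℝ))
    (ε : ℝ) :
    IsOpen {f : {g : C(Θ, ℝ) // (∀ θ, 0 ≤ g θ) ∧ ‖g‖ = 1} |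
      ∃ h' : C(Θ, ℝ), (∀ θ, 0 ≤ h' θ) ∧ h' ≠ 0 ∧ ‖h' - h‖ < ε ∧
        (f : C(Θ, ℝ)) = ‖h'‖⁻¹ • h'} := by
  rw [Metric.isOpen_iff]
  rintro f ⟨h', h'_nonneg, h'_ne, h'_close, hf⟩
  have hc : 0 < ‖h'‖ := norm_pos_iff.mpr h'_ne
  refine ⟨(ε - dist h' h) / ‖h'‖, div_pos (by rwa [sub_pos, dist_eq_norm]) hc, fun g hg => ?_⟩
  rw [Metric.mem_ball, Subtype.dist_eq, hf] at hg
  refine ⟨‖h'‖ • (g : C(Θ, ℝ)), fun θ => mul_nonneg hc.le (g.2.1 θ), ?_, ?_, ?_⟩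
  · rw [← norm_pos_iff, norm_smul_of_norm_eq_one hc.le g.2.2]
    exact hc
  · rw [← dist_eq_norm]
    exact dist_norm_smul_lt_of_dist_inv_norm_smul_lt h'_ne hg
  · exact (inv_norm_smul_smul_of_norm_eq_one hc g.2.2).symm

/-- The normalization map `τ(h) = h / ‖h‖∞` on nonnegative, not-identically-zero continuous
functions on a nonempty compact space is open: the image under `τ` of the sup-norm ball of
radius `ε ≤ ‖h‖∞` around `h` is an open subset of the metric subspace of normalized
(nonnegative, sup-norm one) continuous functions. -/
theorem isOpen_image_of_normalization
    {Θ : Type*} [TopologicalSpace Θ] [CompactSpace Θ] [Nonempty Θ]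
    (h : C(Θ, ℝ)) (h_nonneg : ∀ θ, 0 ≤ h θ) (h_ne : h ≠ 0)
    (ε : ℝ) (hε : 0 < ε) (hε' : ε ≤ ‖h‖) :
    IsOpen {f : {g : C(Θ, ℝ) // (∀ θ, 0 ≤ g θ) ∧ ‖g‖ = 1} |
      ∃ h' : C(Θ, ℝ), (∀ θ, 0 ≤ h' θ) ∧ h' ≠ 0 ∧ ‖h' - h‖ < ε ∧
        (f : C(Θ, ℝ)) = ‖h'‖⁻¹ • h'} :=
  isOpen_image_of_normalization_general h ε
end

section
/- Let Θ be a nonempty compact topological space and let h, h', h'' : Θ → ℝ be continuous functions, none identically zero, with supremum norms ‖·‖_∞. Suppose 0 < ε ≤ ‖h‖_∞, that ‖h' − h‖_∞ < ε, and that ‖ h''/‖h''‖_∞ − h'/‖h'‖_∞ ‖_∞ < (ε − ‖h' − h‖_∞)/(‖h‖_∞ + ‖h' − h‖_∞). Then ‖ ‖h'‖_∞ · (h''/‖h''‖_∞) − h ‖_∞ < ε. -/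
section RescaledNormalization

variable {E : Type*} [NormedAddCommGroup E] [NormedSpace ℝ E]

theorem norm_smul_inv_norm_smul_self (x : E) : ‖x‖ • (‖x‖⁻¹ • x) = x := by
  rcases eq_or_ne x 0 with rfl | hx
  · simp
  · exact smul_inv_smul₀ (norm_ne_zero_iff.mpr hx) x

theorem norm_norm_smul_sub_le (v x y : E) :
    ‖‖x‖ • v - y‖ ≤ ‖x‖ * ‖v - ‖x‖⁻¹ • x‖ + ‖x - y‖ := by
  have split : ‖x‖ • v - y = ‖x‖ • (v - ‖x‖⁻¹ • x) + (x - y) := by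
    rw [smul_sub, norm_smul_inv_norm_smul_self]
    abel
  rw [split]
  refine (norm_add_le _ _).trans ?_
  rw [norm_smul, norm_norm]

theorem norm_norm_smul_sub_lt {v x y : E} (hy : y ≠ 0) {ε : ℝ}
    (hv : ‖v - ‖x‖⁻¹ • x‖ < (ε - ‖x - y‖) / (‖y‖ + ‖x - y‖)) :
    ‖‖x‖ • v - y‖ < ε := by
  have hden : 0 < ‖y‖ + ‖x - y‖ := by
    have := norm_pos_iff.mpr hy
    positivity
  have hx : ‖x‖ ≤ ‖y‖ + ‖x - y‖ := norm_le_insert' x y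
  calc ‖‖x‖ • v - y‖
      ≤ ‖x‖ * ‖v - ‖x‖⁻¹ • x‖ + ‖x - y‖ := norm_norm_smul_sub_le v x y
    _ ≤ (‖y‖ + ‖x - y‖) * ‖v - ‖x‖⁻¹ • x‖ + ‖x - y‖ := by gcongr
    _ < ε := by
        rw [lt_div_iff₀ hden] at hv
        linarith

end RescaledNormalization

theorem normalization_rescale_estimate_general
    {Θ : Type*} [TopologicalSpace Θ] [CompactSpace Θ]
    (h h' h'' : C(Θ, ℝ)) (h_ne : h ≠ 0)
    (ε : ℝ)
    (h2 : ‖(‖h''‖⁻¹ • h'') - (‖h'‖⁻¹ • h')‖ < (ε - ‖h' - h‖) / (‖h‖ + ‖h' - h‖)) :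
    ‖(‖h'‖ • (‖h''‖⁻¹ • h'')) - h‖ < ε :=
  norm_norm_smul_sub_lt h_ne h2

/-- The quantitative estimate from Section `Borel`: if `‖h' − h‖∞ < ε ≤ ‖h‖∞` and the
normalization of `h''` is within `(ε − ‖h' − h‖)/(‖h‖ + ‖h' − h‖)` of that of `h'`,
then the rescaling `‖h'‖ · (h''/‖h''‖)` lies in the `ε`-ball around `h`. -/
theorem normalization_rescale_estimate
    {Θ : Type*} [TopologicalSpace Θ] [CompactSpace Θ] [Nonempty Θ]
    (h h' h'' : C(Θ, ℝ)) (h_ne : h ≠ 0) (h'_ne : h' ≠ 0) (h''_ne : h'' ≠ 0)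
    (ε : ℝ) (hε : 0 < ε) (hεh : ε ≤ ‖h‖)
    (h1 : ‖h' - h‖ < ε)
    (h2 : ‖(‖h''‖⁻¹ • h'') - (‖h'‖⁻¹ • h')‖ < (ε - ‖h' - h‖) / (‖h‖ + ‖h' - h‖)) :
    ‖(‖h'‖ • (‖h''‖⁻¹ • h'')) - h‖ < ε :=
  normalization_rescale_estimate_general h h' h'' h_ne ε h2
end

section
/- Let (Θ, dist) be a metric space carrying a Borel probability measure μ, with an action of ℤ^d given by commuting Borel bijections T_1, …, T_d (each with Borel inverse) each of which preserves μ, and let ζ_T be the recurrence function. Let ρ > 0 and let k ≥ 1 be an integer with 2ρ ≤ ζ_T(k). Then for every θ₀ ∈ Θ the open ball B(θ₀, ρ) satisfies μ(B(θ₀, ρ)) ≤ (k+1)^{−d}. -/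
open MeasureTheory
open scoped ENNReal

/-- The recurrence function `ζ_T(k) = inf_{θ} min_{0 < ‖x‖∞ ≤ k} dist(θ, T^x θ)` of a
`ℤ^d`-action `T` on a metric space. -/
noncomputable def zetaT {Θ : Type*} [MetricSpace Θ] {d : ℕ}
    (T : (Fin d → ℤ) → Θ → Θ) (k : ℕ) : ℝ :=
  sInf {r : ℝ | ∃ θ : Θ, ∃ x : Fin d → ℤ,
    x ≠ 0 ∧ (∀ i, |x i| ≤ (k : ℤ)) ∧ r = dist θ (T x θ)}

/-- Measure estimate underlying Proposition `KacsLemma`: for a measure-preserving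
`ℤ^d`-action on a metric probability space, if `2ρ ≤ ζ_T(k)` then any open ball of
radius `ρ` has measure at most `(k+1)^{-d}`. -/
theorem ball_measure_le_of_zetaT
    {Θ : Type*} [MetricSpace Θ] [MeasurableSpace Θ] [BorelSpace Θ]
    (μ : Measure Θ) [IsProbabilityMeasure μ]
    {d : ℕ}
    (T : (Fin d → ℤ) → Θ → Θ)
    (hT0 : T 0 = id)
    (hTadd : ∀ x y : Fin d → ℤ, T (x + y) = T x ∘ T y)
    (hTmeas : ∀ x : Fin d → ℤ, Measurable (T x))
    (hTpres : ∀ x : Fin d → ℤ, MeasurePreserving (T x) μ μ)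
    (ρ : ℝ) (hρ : 0 < ρ) (k : ℕ) (hk : 1 ≤ k) (hζ : 2 * ρ ≤ zetaT T k)
    (θ₀ : Θ) :
    μ (Metric.ball θ₀ ρ) ≤ (((k : ℝ≥0∞) + 1) ^ d)⁻¹ := by
  set B := Metric.ball θ₀ ρ with hB
  have hBm : MeasurableSet B := measurableSet_ball
  have hzeta : ∀ (θ : Θ) (x : Fin d → ℤ), x ≠ 0 → (∀ i, |x i| ≤ (k : ℤ)) →
      zetaT T k ≤ dist θ (T x θ) := by
    intro θ x hx hxk
    apply csInf_le
    · refine ⟨0, fun r hr => ?_⟩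
      obtain ⟨θ', x', _, _, rfl⟩ := hr
      exact dist_nonneg
    · exact ⟨θ, x, hx, hxk, rfl⟩
  set f : (Fin d → Fin (k + 1)) → Set Θ :=
    fun x => T (fun i => -((x i : ℤ))) ⁻¹' B with hf
  have hdisj : Pairwise (Function.onFun Disjoint f) := by
    intro x y hxy
    rw [Function.onFun, Set.disjoint_left]
    intro z hzx hzy
    set w : Fin d → ℤ := fun i => (x i : ℤ) - (y i : ℤ) with hw
    have hw0 : w ≠ 0 := by
      intro h
      apply hxy
      funext i
      have h1 := congrFun h i
      simp only [hw, Pi.zero_apply, sub_eq_zero] at h1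
      exact Fin.ext (by exact_mod_cast h1)
    have hwk : ∀ i, |w i| ≤ (k : ℤ) := by
      intro i
      have hx1 : (x i : ℤ) < (k : ℤ) + 1 := by exact_mod_cast (x i).isLt
      have hy1 : (y i : ℤ) < (k : ℤ) + 1 := by exact_mod_cast (y i).isLt
      have hx0 : (0 : ℤ) ≤ (x i : ℤ) := Int.ofNat_nonneg _
      have hy0 : (0 : ℤ) ≤ (y i : ℤ) := Int.ofNat_nonneg _
      rw [abs_le]
      constructor <;> simp only [hw] <;> omega
    have hb : T (fun i => -((y i : ℤ))) z
        = T w (T (fun i => -((x i : ℤ))) z) := by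
      have h2 : w + (fun i => -((x i : ℤ))) = (fun i => -((y i : ℤ))) := by
        funext i
        simp only [hw, Pi.add_apply]
        ring
      rw [← h2, hTadd]
      rfl
    have hd : dist (T (fun i => -((x i : ℤ))) z)
        (T w (T (fun i => -((x i : ℤ))) z)) < 2 * ρ := by
      rw [← hb]
      have h1 : dist (T (fun i => -((x i : ℤ))) z) θ₀ < ρ := hzx
      have h2 : dist θ₀ (T (fun i => -((y i : ℤ))) z) < ρ := by
        rw [dist_comm]; exact hzy
      calc dist (T (fun i => -((x i : ℤ))) z) (T (fun i => -((y i : ℤ))) z)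
          ≤ dist (T (fun i => -((x i : ℤ))) z) θ₀
            + dist θ₀ (T (fun i => -((y i : ℤ))) z) := dist_triangle _ _ _
        _ < ρ + ρ := by linarith
        _ = 2 * ρ := by ring
    exact absurd (hζ.trans (hzeta _ w hw0 hwk)) (not_le.mpr hd)
  have hmeasf : ∀ x, μ (f x) = μ B := by
    intro x
    exact (hTpres _).measure_preimage hBm.nullMeasurableSet
  have hsum : μ (⋃ x, f x) = ((k : ℝ≥0∞) + 1) ^ d * μ B := by
    rw [measure_iUnion hdisj (fun x => (hTmeas _) hBm), tsum_fintype]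
    simp only [hmeasf, Finset.sum_const, Finset.card_univ, nsmul_eq_mul]
    congr 1
    simp [Fintype.card_fun]
  have hle : ((k : ℝ≥0∞) + 1) ^ d * μ B ≤ 1 := by
    rw [← hsum]
    calc μ (⋃ x, f x) ≤ μ Set.univ := measure_mono (Set.subset_univ _)
      _ = 1 := measure_univ
  rw [ENNReal.le_inv_iff_mul_le, mul_comm]
  exact hle
end

section
/- Let (Θ, dist) be a metric space carrying a Borel probability measure μ, with an action of ℤ^d given by commuting Borel bijections T_1, …, T_d (each with Borel inverse) each of which preserves μ, and let ζ_T be the recurrence function. Let h : Θ → ℝ be Borel measurable, let ε > 0, let F ⊆ Θ be a finite set, let ρ > 0 and let k ≥ 1 be an integer with 2ρ ≤ ζ_T(k). Assume {θ ∈ Θ : h(θ) < ε} ⊆ ⋃_{θ₀ ∈ F} B(θ₀, ρ), where B(θ₀, ρ) is the open ball. Then for every integer L ≥ 0, μ({θ ∈ Θ : there exists x ∈ ℤ^d with ‖x‖_∞ ≤ L and h(T^x θ) < ε}) ≤ (2L+1)^d · |F| · (k+1)^{−d}. -/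
open MeasureTheory
open scoped ENNReal

/-- Proposition `KacsLemma`: if the sublevel set `{h < ε}` is covered by balls of radius `ρ`
around the finitely many points of `F` and `2ρ ≤ ζ_T(k)`, then the measure of the set of
phases `θ` for which the box `Λ_L` contains an `ε`-resonant site is at most
`(2L+1)^d · |F| · (k+1)^{-d}`. -/
theorem resonance_measure_bound
    {Θ : Type*} [MetricSpace Θ] [MeasurableSpace Θ] [BorelSpace Θ]
    (μ : Measure Θ) [IsProbabilityMeasure μ]
    {d : ℕ}
    (T : (Fin d → ℤ) → Θ → Θ)
    (hT0 : T 0 = id)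
    (hTadd : ∀ x y : Fin d → ℤ, T (x + y) = T x ∘ T y)
    (hTmeas : ∀ x : Fin d → ℤ, Measurable (T x))
    (hTpres : ∀ x : Fin d → ℤ, MeasurePreserving (T x) μ μ)
    (h : Θ → ℝ) (hmeas : Measurable h)
    (ε : ℝ) (hε : 0 < ε) (F : Finset Θ)
    (ρ : ℝ) (hρ : 0 < ρ) (k : ℕ) (hk : 1 ≤ k) (hζ : 2 * ρ ≤ zetaT T k)
    (hcover : {θ : Θ | h θ < ε} ⊆ ⋃ θ₀ ∈ F, Metric.ball θ₀ ρ)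
    (L : ℕ) :
    μ {θ : Θ | ∃ x : Fin d → ℤ, (∀ i, |x i| ≤ (L : ℤ)) ∧ h (T x θ) < ε} ≤
      (2 * (L : ℝ≥0∞) + 1) ^ d * (F.card : ℝ≥0∞) * (((k : ℝ≥0∞) + 1) ^ d)⁻¹ := by
  classical
  set c : ℝ≥0∞ := (((k : ℝ≥0∞) + 1) ^ d)⁻¹ with hc
  have hzeta_le : ∀ (θ : Θ) (z : Fin d → ℤ), z ≠ 0 → (∀ i, |z i| ≤ (k : ℤ)) →
      zetaT T k ≤ dist θ (T z θ) := by
    intro θ z hz hzk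
    refine csInf_le ⟨0, ?_⟩ ⟨θ, z, hz, hzk, rfl⟩
    rintro r ⟨θ', x, -, -, rfl⟩
    exact dist_nonneg
  -- key bound on the measure of each ball
  have hball : ∀ θ₀ : Θ, μ (Metric.ball θ₀ ρ) ≤ c := by
    intro θ₀
    set B := Metric.ball θ₀ ρ with hB
    have hBmeas : MeasurableSet B := Metric.isOpen_ball.measurableSet
    set boxK : Finset (Fin d → ℤ) := Fintype.piFinset (fun _ => Finset.Icc 0 (k : ℤ)) with hboxK
    have hdisj : (boxK : Set (Fin d → ℤ)).PairwiseDisjoint (fun x => T x ⁻¹' B) := by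
      intro x hx y hy hxy
      rw [Function.onFun, Set.disjoint_left]
      intro θ hxθ hyθ
      have hz : x - y ≠ 0 := sub_ne_zero.mpr hxy
      have hzk : ∀ i, |(x - y) i| ≤ (k : ℤ) := by
        intro i
        have hx' := Finset.mem_Icc.mp (Fintype.mem_piFinset.mp hx i)
        have hy' := Finset.mem_Icc.mp (Fintype.mem_piFinset.mp hy i)
        simp only [Pi.sub_apply]
        rw [abs_le]; omega
      have hT : T (x - y) (T y θ) = T x θ := by
        calc T (x - y) (T y θ) = (T (x - y) ∘ T y) θ := rfl
          _ = T ((x - y) + y) θ := by rw [hTadd]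
          _ = T x θ := by rw [sub_add_cancel]
      have hd1 : dist (T x θ) θ₀ < ρ := Metric.mem_ball.mp hxθ
      have hd2 : dist (T y θ) θ₀ < ρ := Metric.mem_ball.mp hyθ
      have h1 : dist (T y θ) (T (x - y) (T y θ)) < 2 * ρ := by
        rw [hT]
        have htri := dist_triangle (T y θ) θ₀ (T x θ)
        rw [dist_comm θ₀ (T x θ)] at htri
        linarith
      have h2 := hzeta_le (T y θ) (x - y) hz hzk
      linarith
    have hsum : ∑ x ∈ boxK, μ (T x ⁻¹' B) = μ (⋃ x ∈ boxK, T x ⁻¹' B) :=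
      (measure_biUnion_finset hdisj (fun x _ => (hTmeas x) hBmeas)).symm
    have hμpre : ∀ x : Fin d → ℤ, μ (T x ⁻¹' B) = μ B :=
      fun x => (hTpres x).measure_preimage hBmeas.nullMeasurableSet
    have hcard : boxK.card = (k + 1) ^ d := by
      rw [hboxK, Fintype.card_piFinset]
      simp [Int.card_Icc]
    have hle1 : ((k + 1) ^ d : ℕ) * μ B ≤ 1 := by
      have : ∑ x ∈ boxK, μ (T x ⁻¹' B) = (boxK.card : ℝ≥0∞) * μ B := by
        rw [Finset.sum_congr rfl (fun x _ => hμpre x), Finset.sum_const, nsmul_eq_mul]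
      calc ((k + 1) ^ d : ℕ) * μ B = ∑ x ∈ boxK, μ (T x ⁻¹' B) := by
            rw [this, hcard]
        _ = μ (⋃ x ∈ boxK, T x ⁻¹' B) := hsum
        _ ≤ μ Set.univ := measure_mono (Set.subset_univ _)
        _ = 1 := measure_univ
    rw [hc]
    rw [ENNReal.le_inv_iff_mul_le]
    calc μ B * ((k : ℝ≥0∞) + 1) ^ d = ((k + 1) ^ d : ℕ) * μ B := by
          push_cast; ring
      _ ≤ 1 := hle1
  -- the union bound
  set boxL : Finset (Fin d → ℤ) := Fintype.piFinset (fun _ => Finset.Icc (-(L : ℤ)) L) with hboxL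
  have hsub : {θ : Θ | ∃ x : Fin d → ℤ, (∀ i, |x i| ≤ (L : ℤ)) ∧ h (T x θ) < ε} ⊆
      ⋃ x ∈ boxL, ⋃ θ₀ ∈ F, T x ⁻¹' Metric.ball θ₀ ρ := by
    rintro θ ⟨x, hxL, hxh⟩
    have hx : x ∈ boxL := by
      rw [hboxL, Fintype.mem_piFinset]
      intro i
      rw [Finset.mem_Icc]
      have := abs_le.mp (hxL i)
      omega
    have := hcover hxh
    simp only [Set.mem_iUnion] at this ⊢
    obtain ⟨θ₀, hθ₀F, hθ₀⟩ := this
    exact ⟨x, hx, θ₀, hθ₀F, hθ₀⟩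
  have hcardL : boxL.card = (2 * L + 1) ^ d := by
    rw [hboxL, Fintype.card_piFinset]
    simp [Int.card_Icc]
    congr 1
    omega
  calc μ {θ : Θ | ∃ x : Fin d → ℤ, (∀ i, |x i| ≤ (L : ℤ)) ∧ h (T x θ) < ε}
      ≤ μ (⋃ x ∈ boxL, ⋃ θ₀ ∈ F, T x ⁻¹' Metric.ball θ₀ ρ) := measure_mono hsub
    _ ≤ ∑ x ∈ boxL, μ (⋃ θ₀ ∈ F, T x ⁻¹' Metric.ball θ₀ ρ) := measure_biUnion_finset_le _ _
    _ ≤ ∑ x ∈ boxL, ∑ θ₀ ∈ F, μ (T x ⁻¹' Metric.ball θ₀ ρ) :=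
        Finset.sum_le_sum (fun x _ => measure_biUnion_finset_le _ _)
    _ = ∑ x ∈ boxL, ∑ θ₀ ∈ F, μ (Metric.ball θ₀ ρ) := by
        refine Finset.sum_congr rfl (fun x _ => Finset.sum_congr rfl (fun θ₀ _ => ?_))
        exact (hTpres x).measure_preimage Metric.isOpen_ball.measurableSet.nullMeasurableSet
    _ ≤ ∑ x ∈ boxL, ∑ θ₀ ∈ F, c :=
        Finset.sum_le_sum (fun x _ => Finset.sum_le_sum (fun θ₀ _ => hball θ₀))
    _ = (boxL.card : ℝ≥0∞) * (F.card : ℝ≥0∞) * c := by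
        simp [Finset.sum_const, nsmul_eq_mul, mul_assoc]
    _ = (2 * (L : ℝ≥0∞) + 1) ^ d * (F.card : ℝ≥0∞) * c := by
        rw [hcardL]; push_cast; ring
end

section
/- Let (Θ, dist) be a metric space with an action of ℤ^d given by commuting bijections T_1, …, T_d, with recurrence function ζ_T. Let h : Θ → ℝ, let ε > 0, let F ⊆ Θ be a finite set, let ρ > 0 and let k ≥ 1 be an integer with 2ρ ≤ ζ_T(k), and assume {θ ∈ Θ : h(θ) < ε} ⊆ ⋃_{θ₀ ∈ F} B(θ₀, ρ). Then for every θ ∈ Θ and every subset S ⊆ ℤ^d whose ℓ∞-diameter is at most k (i.e. ‖x − y‖_∞ ≤ k for all x, y ∈ S), the number of x ∈ S with h(T^x θ) < ε is at most |F|. -/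
/-- Combinatorial core of Proposition `simple2regular`: if the sublevel set `{h < ε}` is
covered by balls of radius `ρ` around the finitely many points of `F` and `2ρ ≤ ζ_T(k)`,
then any set `S ⊆ ℤ^d` of `ℓ∞`-diameter at most `k` contains at most `|F|` sites `x`
with `h(T^x θ) < ε`. -/
theorem resonant_sites_card_le
    {Θ : Type*} [MetricSpace Θ]
    {d : ℕ}
    (T : (Fin d → ℤ) → Θ → Θ)
    (hT0 : T 0 = id)
    (hTadd : ∀ x y : Fin d → ℤ, T (x + y) = T x ∘ T y)
    (h : Θ → ℝ) (ε : ℝ) (hε : 0 < ε) (F : Finset Θ)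
    (ρ : ℝ) (hρ : 0 < ρ) (k : ℕ) (hk : 1 ≤ k) (hζ : 2 * ρ ≤ zetaT T k)
    (hcover : {θ : Θ | h θ < ε} ⊆ ⋃ θ₀ ∈ F, Metric.ball θ₀ ρ)
    (θ : Θ) (S : Set (Fin d → ℤ))
    (hS : ∀ x ∈ S, ∀ y ∈ S, ∀ i, |x i - y i| ≤ (k : ℤ)) :
    Set.ncard {x ∈ S | h (T x θ) < ε} ≤ F.card := by
  classical
  set s : Set (Fin d → ℤ) := {x ∈ S | h (T x θ) < ε} with hs
  have key : ∀ x ∈ s, ∃ θ₀ ∈ F, T x θ ∈ Metric.ball θ₀ ρ := by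
    intro x hx
    have : T x θ ∈ {θ : Θ | h θ < ε} := hx.2
    have := hcover this
    simpa using this
  have : Nonempty Θ := ⟨θ⟩
  choose! f hf1 hf2 using key
  -- f is injective on s
  have hinj : Set.InjOn f s := by
    intro x hx y hy hxy
    by_contra hne
    have hsub : x - y ≠ 0 := sub_ne_zero.mpr hne
    have hxy' : T x θ = T (x - y) (T y θ) := by
      have : T ((x - y) + y) = T (x - y) ∘ T y := hTadd _ _
      rw [sub_add_cancel] at this
      rw [this]; rfl
    have hmem : dist (T y θ) (T x θ) ∈ {r : ℝ | ∃ θ : Θ, ∃ x : Fin d → ℤ,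
        x ≠ 0 ∧ (∀ i, |x i| ≤ (k : ℤ)) ∧ r = dist θ (T x θ)} := by
      exact ⟨T y θ, x - y, hsub, fun i => by simpa using hS x hx.1 y hy.1 i, by rw [hxy']⟩
    have hbdd : BddBelow {r : ℝ | ∃ θ : Θ, ∃ x : Fin d → ℤ,
        x ≠ 0 ∧ (∀ i, |x i| ≤ (k : ℤ)) ∧ r = dist θ (T x θ)} := by
      refine ⟨0, fun r hr => ?_⟩
      obtain ⟨θ', x', _, _, hr⟩ := hr
      rw [hr]; exact dist_nonneg
    have hle : zetaT T k ≤ dist (T y θ) (T x θ) := csInf_le hbdd hmem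
    have h1 : dist (T x θ) (f x) < ρ := by simpa [Metric.mem_ball, dist_comm] using hf2 x hx
    have h2 : dist (f y) (T y θ) < ρ := by simpa [Metric.mem_ball, dist_comm] using hf2 y hy
    have htri : dist (T y θ) (T x θ) ≤ dist (T y θ) (f y) + dist (f x) (T x θ) := by
      rw [hxy]
      exact dist_triangle _ _ _
    rw [dist_comm (T y θ) (f y)] at htri
    rw [dist_comm (T x θ) (f x)] at h1
    linarith
  have himg : f '' s ⊆ (F : Set Θ) := by
    rintro _ ⟨x, hx, rfl⟩
    exact hf1 x hx
  calc Set.ncard s = Set.ncard (f '' s) := (Set.ncard_image_of_injOn hinj).symm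
    _ ≤ Set.ncard (F : Set Θ) := Set.ncard_le_ncard himg F.finite_toSet
    _ = F.card := Set.ncard_coe_finset F
end

section
/- Let (Θ, dist) be a compact metric space with an aperiodic action of ℤ^d given by commuting homeomorphisms T_1, …, T_d, with recurrence function ζ_T, let F ⊆ Θ be a finite nonempty set, and let ξ > 0. Then there exists a continuous function ψ : Θ → [0,1] such that: (i) ψ(θ) = 0 if and only if θ ∈ F; (ii) ψ(θ) = 1 whenever dist(θ, F) ≥ ζ_T(1); and (iii) for every integer k ≥ 1 and every θ ∈ Θ with dist(θ, F) ≥ ζ_T(k), one has ψ(θ) ≥ exp(1 − k^ξ). -/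
open Filter Topology

/-- Telescoping sums (starting at an arbitrary index `j`) of a sequence tending to zero. -/
private lemma hasSum_telescope {b : ℕ → ℝ} (hb0 : ∀ n, 0 ≤ b n - b (n + 1))
    (hb : Tendsto b atTop (𝓝 0)) (j : ℕ) :
    HasSum (fun n => b (n + j) - b (n + j + 1)) (b j) := by
  rw [hasSum_iff_tendsto_nat_of_nonneg (fun n => hb0 (n + j))]
  have key : ∀ N : ℕ, ∑ i ∈ Finset.range N, (b (i + j) - b (i + j + 1)) = b j - b (N + j) := by
    intro N
    have h1 : ∀ i : ℕ, b (i + j + 1) = b (i + 1 + j) := fun i => by rw [Nat.add_right_comm]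
    simp only [h1]
    simpa using Finset.sum_range_sub' (fun i => b (i + j)) N
  simp only [key]
  have : Tendsto (fun N : ℕ => b j - b (N + j)) atTop (𝓝 (b j - 0)) :=
    tendsto_const_nhds.sub (hb.comp (tendsto_add_atTop_nat j))
  simpa using this

private lemma zetaT_set_nonempty {Θ : Type*} [MetricSpace Θ] [Nonempty Θ]
    {d : ℕ} (hd : 0 < d) (T : (Fin d → ℤ) → Θ → Θ) {k : ℕ} (hk : 1 ≤ k) :
    {r : ℝ | ∃ θ : Θ, ∃ x : Fin d → ℤ,
      x ≠ 0 ∧ (∀ i, |x i| ≤ (k : ℤ)) ∧ r = dist θ (T x θ)}.Nonempty := by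
  classical
  set i0 : Fin d := ⟨0, hd⟩
  set x0 : Fin d → ℤ := fun i => if i = i0 then 1 else 0 with hx0
  refine ⟨dist (Classical.arbitrary Θ) (T x0 (Classical.arbitrary Θ)),
    Classical.arbitrary Θ, x0, ?_, ?_, rfl⟩
  · intro h
    have := congrFun h i0
    simp [x0] at this
  · intro i
    by_cases h : i = i0 <;> simp [x0, h] <;> omega

private lemma zetaT_pos {Θ : Type*} [MetricSpace Θ] [CompactSpace Θ] [Nonempty Θ]
    {d : ℕ} (hd : 0 < d) (T : (Fin d → ℤ) → Θ → Θ)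
    (hTcont : ∀ x : Fin d → ℤ, Continuous (T x))
    (haper : ∀ x : Fin d → ℤ, x ≠ 0 → ∀ θ : Θ, T x θ ≠ θ)
    {k : ℕ} (hk : 1 ≤ k) : 0 < zetaT T k := by
  classical
  set X : Finset (Fin d → ℤ) :=
    (Fintype.piFinset fun _ : Fin d => Finset.Icc (-(k : ℤ)) k).filter (· ≠ 0) with hX
  have hmemX : ∀ x : Fin d → ℤ, x ≠ 0 → (∀ i, |x i| ≤ (k : ℤ)) → x ∈ X := by
    intro x hx hxk
    refine Finset.mem_filter.2 ⟨Fintype.mem_piFinset.2 fun i => ?_, hx⟩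
    rw [Finset.mem_Icc]
    exact abs_le.1 (hxk i)
  have hXne : X.Nonempty := by
    obtain ⟨r, θ, x, hx, hxk, -⟩ := zetaT_set_nonempty hd T hk
    exact ⟨x, hmemX x hx hxk⟩
  set G : Θ → ℝ := fun θ => X.inf' hXne fun x => dist θ (T x θ) with hG
  have hGcont : Continuous G :=
    Continuous.finset_inf'_apply hXne fun x _ => continuous_id.dist (hTcont x)
  have hGpos : ∀ θ, 0 < G θ := by
    intro θ
    rw [hG]
    rw [Finset.lt_inf'_iff]
    intro x hx
    exact dist_pos.2 (Ne.symm (haper x (Finset.mem_filter.1 hx).2 θ))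
  obtain ⟨θ0, -, hθ0⟩ :=
    isCompact_univ.exists_isMinOn Set.univ_nonempty hGcont.continuousOn
  have : G θ0 ≤ zetaT T k := by
    refine le_csInf (zetaT_set_nonempty hd T hk) ?_
    rintro r ⟨θ, x, hx, hxk, rfl⟩
    have h1 : G θ0 ≤ G θ := hθ0 (Set.mem_univ θ)
    have h2 : G θ ≤ dist θ (T x θ) := Finset.inf'_le _ (hmemX x hx hxk)
    linarith
  linarith [hGpos θ0]

private lemma zetaT_anti {Θ : Type*} [MetricSpace Θ] [Nonempty Θ]
    {d : ℕ} (hd : 0 < d) (T : (Fin d → ℤ) → Θ → Θ)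
    {k k' : ℕ} (hk : 1 ≤ k) (hkk' : k ≤ k') : zetaT T k' ≤ zetaT T k := by
  refine csInf_le_csInf ?_ (zetaT_set_nonempty hd T hk) ?_
  · refine ⟨0, ?_⟩
    rintro r ⟨θ, x, -, -, rfl⟩
    exact dist_nonneg
  · rintro r ⟨θ, x, hx, hxk, rfl⟩
    exact ⟨θ, x, hx, fun i => (hxk i).trans (by exact_mod_cast hkk'), rfl⟩

/-- The construction at the heart of Theorem `fasterthanpolynomial`: for an aperiodic action
of `ℤ^d` by commuting homeomorphisms on a compact metric space, a finite nonempty set `F`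
and `ξ > 0`, there is a continuous `ψ : Θ → [0,1]` vanishing exactly on `F`, equal to `1`
at distance at least `ζ_T(1)` from `F`, and satisfying `ψ(θ) ≥ exp(1 − k^ξ)` whenever
`dist(θ, F) ≥ ζ_T(k)`. -/
theorem exists_sampling_function_calibrated_to_recurrence
    {Θ : Type*} [MetricSpace Θ] [CompactSpace Θ] [Nonempty Θ]
    {d : ℕ} (hd : 0 < d)
    (T : (Fin d → ℤ) → Θ → Θ)
    (hT0 : T 0 = id)
    (hTadd : ∀ x y : Fin d → ℤ, T (x + y) = T x ∘ T y)
    (hTcont : ∀ x : Fin d → ℤ, Continuous (T x))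
    (haper : ∀ x : Fin d → ℤ, x ≠ 0 → ∀ θ : Θ, T x θ ≠ θ)
    (F : Set Θ) (hF : F.Finite) (hFne : F.Nonempty)
    (ξ : ℝ) (hξ : 0 < ξ) :
    ∃ ψ : C(Θ, ℝ),
      (∀ θ, ψ θ ∈ Set.Icc (0 : ℝ) 1) ∧
      (∀ θ, ψ θ = 0 ↔ θ ∈ F) ∧
      (∀ θ, zetaT T 1 ≤ Metric.infDist θ F → ψ θ = 1) ∧
      (∀ k : ℕ, 1 ≤ k → ∀ θ, zetaT T k ≤ Metric.infDist θ F →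
        Real.exp (1 - (k : ℝ) ^ ξ) ≤ ψ θ) := by
  classical
  -- the telescoping weights
  set b : ℕ → ℝ := fun n => Real.exp (1 - ((n : ℝ) + 1) ^ ξ) with hbdef
  have hb0 : b 0 = 1 := by simp [hbdef, Real.one_rpow]
  have hbmono : ∀ m n : ℕ, m ≤ n → b n ≤ b m := by
    intro m n hmn
    apply Real.exp_le_exp.2
    have : ((m : ℝ) + 1) ^ ξ ≤ ((n : ℝ) + 1) ^ ξ := by
      apply Real.rpow_le_rpow (by positivity) _ hξ.le
      have : (m : ℝ) ≤ n := by exact_mod_cast hmn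
      linarith
    linarith
  have hbnonneg : ∀ n, 0 ≤ b n - b (n + 1) := fun n => by
    have := hbmono n (n + 1) (Nat.le_succ n); linarith
  have hbpos : ∀ n, 0 < b n := fun n => Real.exp_pos _
  have hbtendsto : Tendsto b atTop (𝓝 0) := by
    have h1 : Tendsto (fun n : ℕ => ((n : ℝ) + 1) ^ ξ) atTop atTop :=
      (tendsto_rpow_atTop hξ).comp
        (tendsto_atTop_add_const_right _ _ tendsto_natCast_atTop_atTop)
    have h2 : Tendsto (fun n : ℕ => 1 - ((n : ℝ) + 1) ^ ξ) atTop atBot :=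
      tendsto_atBot_add_const_left _ _ (tendsto_neg_atBot_iff.2 h1)
    exact Real.tendsto_exp_atBot.comp h2
  set a : ℕ → ℝ := fun n => b n - b (n + 1) with hadef
  have hsum_a : ∀ j : ℕ, HasSum (fun n => a (n + j)) (b j) := by
    intro j
    have := hasSum_telescope hbnonneg hbtendsto j
    exact this
  have hsummable_a : Summable a := by
    have := hsum_a 0
    simpa using this.summable
  -- positivity of the recurrence function
  have hζpos : ∀ k : ℕ, 1 ≤ k → 0 < zetaT T k := fun k hk =>
    zetaT_pos hd T hTcont haper hk
  have hζanti : ∀ k k' : ℕ, 1 ≤ k → k ≤ k' → zetaT T k' ≤ zetaT T k :=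
    fun k k' hk hkk' => zetaT_anti hd T hk hkk'
  -- the building blocks
  set u : ℕ → Θ → ℝ :=
    fun n θ => a n * min 1 (Metric.infDist θ F / zetaT T (n + 1)) with hudef
  have humem : ∀ n θ, 0 ≤ u n θ ∧ u n θ ≤ a n := by
    intro n θ
    have hq : 0 ≤ Metric.infDist θ F / zetaT T (n + 1) :=
      div_nonneg Metric.infDist_nonneg (hζpos (n + 1) (Nat.le_add_left 1 n)).le
    constructor
    · exact mul_nonneg (hbnonneg n) (le_min zero_le_one hq)
    · calc u n θ ≤ a n * 1 :=
            mul_le_mul_of_nonneg_left (min_le_left _ _) (hbnonneg n)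
        _ = a n := mul_one _
  have hucont : ∀ n, Continuous (u n) := by
    intro n
    exact continuous_const.mul
      (continuous_const.min ((Metric.continuous_infDist_pt F).div_const _))
  have hubound : ∀ n θ, ‖u n θ‖ ≤ a n := by
    intro n θ
    rw [Real.norm_eq_abs, abs_of_nonneg (humem n θ).1]
    exact (humem n θ).2
  have hψcont : Continuous fun θ => ∑' n, u n θ :=
    continuous_tsum hucont hsummable_a hubound
  have hsummable_u : ∀ θ, Summable fun n => u n θ := fun θ =>
    Summable.of_nonneg_of_le (fun n => (humem n θ).1) (fun n => (humem n θ).2) hsummable_a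
  refine ⟨⟨fun θ => ∑' n, u n θ, hψcont⟩, ?_, ?_, ?_, ?_⟩
  -- the key lower bound (proved first, reused)
  all_goals
    have hkey : ∀ k : ℕ, 1 ≤ k → ∀ θ, zetaT T k ≤ Metric.infDist θ F →
        Real.exp (1 - (k : ℝ) ^ ξ) ≤ ∑' n, u n θ := by
      intro k hk θ hθ
      obtain ⟨j, rfl⟩ : ∃ j, k = j + 1 := ⟨k - 1, (Nat.succ_pred_eq_of_pos hk).symm⟩
      have hterm : ∀ n : ℕ, u (n + j) θ = a (n + j) := by
        intro n
        have h1 : zetaT T (n + j + 1) ≤ Metric.infDist θ F :=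
          le_trans (hζanti (j + 1) (n + j + 1) (Nat.le_add_left 1 j) (by omega)) hθ
        have h2 : (1 : ℝ) ≤ Metric.infDist θ F / zetaT T (n + j + 1) :=
          (one_le_div (hζpos (n + j + 1) (by omega))).2 h1
        simp [hudef, min_eq_left h2]
      have htail : HasSum (fun n => u (n + j) θ) (b j) := by
        have := hsum_a j
        simpa only [← hterm] using this
      have hsplit := Summable.sum_add_tsum_nat_add (f := fun n => u n θ) j (hsummable_u θ)
      have hnn : (0 : ℝ) ≤ ∑ i ∈ Finset.range j, u i θ :=
        Finset.sum_nonneg fun i _ => (humem i θ).1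
      have hbj : Real.exp (1 - ((j : ℕ) + 1 : ℝ) ^ ξ) = b j := by simp [hbdef]
      have : b j ≤ ∑' n, u n θ := by
        rw [← hsplit, htail.tsum_eq]
        linarith
      calc Real.exp (1 - ((j + 1 : ℕ) : ℝ) ^ ξ) = b j := by
            push_cast
            rw [← hbj]
        _ ≤ ∑' n, u n θ := this
  · -- values in [0,1]
    intro θ
    constructor
    · exact tsum_nonneg fun n => (humem n θ).1
    · have h1 : ∑' n, u n θ ≤ ∑' n, a n :=
        Summable.tsum_le_tsum (fun n => (humem n θ).2) (hsummable_u θ) hsummable_a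
      have h2 : ∑' n, a n = 1 := by
        have := (hsum_a 0).tsum_eq
        simpa [hb0] using this
      simp only [ContinuousMap.coe_mk]
      linarith
  · -- zero set is exactly F
    intro θ
    simp only [ContinuousMap.coe_mk]
    constructor
    · intro hψ0
      by_contra hθF
      have hdpos : 0 < Metric.infDist θ F :=
        (hF.isClosed.notMem_iff_infDist_pos hFne).1 hθF
      have ha0 : 0 < a 0 := by
        have : (1 : ℝ) < ((0 : ℝ) + 1 + 1) ^ ξ := by
          rw [show ((0 : ℝ) + 1 + 1) = 2 by norm_num]
          rw [Real.one_lt_rpow_iff_of_pos (by norm_num)]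
          exact Or.inl ⟨by norm_num, hξ⟩
        have : b 1 < 1 := by
          rw [hbdef]
          simp only [Nat.cast_one]
          calc Real.exp (1 - ((1 : ℝ) + 1) ^ ξ) < Real.exp 0 := by
                apply Real.exp_lt_exp.2; norm_num at this ⊢; linarith
            _ = 1 := Real.exp_zero
        simp only [hadef, hb0]
        linarith
      have hu0 : 0 < u 0 θ := by
        apply mul_pos ha0
        exact lt_min one_pos (div_pos hdpos (hζpos 1 le_rfl))
      have hle : u 0 θ ≤ ∑' n, u n θ :=
        Summable.le_tsum (hsummable_u θ) 0 fun i _ => (humem i θ).1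
      linarith
    · intro hθF
      have hd0 : Metric.infDist θ F = 0 := Metric.infDist_zero_of_mem hθF
      have : ∀ n, u n θ = 0 := by
        intro n
        simp [hudef, hd0]
      simp [this]
  · -- equals one far from F
    intro θ hθ
    have h1 : Real.exp (1 - ((1 : ℕ) : ℝ) ^ ξ) ≤ ∑' n, u n θ := hkey 1 le_rfl θ hθ
    have h2 : ∑' n, u n θ ≤ 1 := by
      have h1' : ∑' n, u n θ ≤ ∑' n, a n :=
        Summable.tsum_le_tsum (fun n => (humem n θ).2) (hsummable_u θ) hsummable_a
      have h2' : ∑' n, a n = 1 := by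
        have := (hsum_a 0).tsum_eq
        simpa [hb0] using this
      linarith
    have : Real.exp (1 - ((1 : ℕ) : ℝ) ^ ξ) = 1 := by
      simp [Real.one_rpow]
    simp only [ContinuousMap.coe_mk]
    linarith [h1, h2, this.symm.le.trans h1]
  · -- the calibrated lower bound
    intro k hk θ hθ
    exact hkey k hk θ hθ
end
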